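/- Let θ: ℝ → ℝ^d solve the modified gradient flow θ'(t) = -g(θ(t)) - η·ξ₀(θ(t)) with g(θ) = ∇f(θ) + λθ and ξ₀(θ) = (1/2)(H(θ) + λI)(∇f(θ) + λθ), where f is smooth and scale-invariant on coordinate subset A. Then r_A²(t) := ‖θ_A(t)‖² satisfies (d/dt) r_A²(t) = -2λ(1 + ηλ/2)·r_A²(t) + (η/r_A²(t))·‖∇_A f(θ̂_A(t) + θ_{A^c}(t))‖², where θ̂_A := θ_A/‖θ_A‖. -/

import Mathlib

open RealInnerProductSpace

/-- Projection of `θ` onto the coordinates in `A` (other coordinates set to zero). -/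
def projA {d : ℕ} (A : Finset (Fin d)) (θ : EuclideanSpace ℝ (Fin d)) :
    EuclideanSpace ℝ (Fin d) :=
  WithLp.toLp 2 (fun i => if i ∈ A then θ i else 0)

/-- Projection of `θ` onto the coordinates outside `A`. -/
def projAc {d : ℕ} (A : Finset (Fin d)) (θ : EuclideanSpace ℝ (Fin d)) :
    EuclideanSpace ℝ (Fin d) :=
  WithLp.toLp 2 (fun i => if i ∈ A then 0 else θ i)

noncomputable def Pclm {d : ℕ} (A : Finset (Fin d)) :
    EuclideanSpace ℝ (Fin d) →L[ℝ] EuclideanSpace ℝ (Fin d) :=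
  LinearMap.toContinuousLinearMap
    { toFun := projA A
      map_add' := by
        intro x y; ext i; simp only [projA, PiLp.add_apply, PiLp.toLp_apply]; split <;> simp
      map_smul' := by
        intro c x; ext i; simp only [projA, PiLp.smul_apply, RingHom.id_apply, PiLp.toLp_apply]
        split <;> simp }

@[simp] lemma Pclm_apply {d : ℕ} (A : Finset (Fin d)) (x : EuclideanSpace ℝ (Fin d)) :
    Pclm A x = projA A x := rfl

lemma P_add_Q {d : ℕ} (A : Finset (Fin d)) (x : EuclideanSpace ℝ (Fin d)) :
    projA A x + projAc A x = x := by
  ext i; simp only [projA, projAc, PiLp.add_apply, PiLp.toLp_apply]; split <;> simp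

lemma inner_projA_left {d : ℕ} (A : Finset (Fin d)) (u v : EuclideanSpace ℝ (Fin d)) :
    ⟪projA A u, v⟫ = ∑ i ∈ A, u i * v i := by
  rw [PiLp.inner_apply]
  simp only [projA, RCLike.inner_apply, conj_trivial, PiLp.toLp_apply]
  simp only [mul_ite, mul_zero]
  rw [Finset.sum_ite_mem, Finset.univ_inter]
  exact Finset.sum_congr rfl fun i _ => mul_comm _ _

lemma inner_projA_right {d : ℕ} (A : Finset (Fin d)) (u v : EuclideanSpace ℝ (Fin d)) :
    ⟪u, projA A v⟫ = ∑ i ∈ A, u i * v i := by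
  rw [real_inner_comm, inner_projA_left]
  exact Finset.sum_congr rfl fun i _ => mul_comm _ _

lemma inner_projA_projA {d : ℕ} (A : Finset (Fin d)) (u v : EuclideanSpace ℝ (Fin d)) :
    ⟪projA A u, projA A v⟫ = ⟪projA A u, v⟫ := by
  rw [inner_projA_left, inner_projA_left]
  refine Finset.sum_congr rfl fun i hi => ?_
  simp [projA, hi]

lemma contDiff_gradient {d : ℕ} (f : EuclideanSpace ℝ (Fin d) → ℝ) (hf : ContDiff ℝ (⊤ : ℕ∞) f) :
    ContDiff ℝ (⊤ : ℕ∞) (gradient f) := by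
  have h1 : ContDiff ℝ (⊤ : ℕ∞) (fderiv ℝ f) := hf.fderiv_right (by simp)
  have h2 := ((InnerProductSpace.toDual ℝ (EuclideanSpace ℝ (Fin d))).symm.contDiff).comp h1
  exact h2

lemma fderiv_eq_inner_gradient {d : ℕ} (f : EuclideanSpace ℝ (Fin d) → ℝ)
    (hf : ContDiff ℝ (⊤ : ℕ∞) f) (x v : EuclideanSpace ℝ (Fin d)) :
    fderiv ℝ f x v = ⟪gradient f x, v⟫ := by
  have h : HasGradientAt f (gradient f x) x :=
    (hf.differentiable (by simp) x).hasGradientAt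
  rw [h.hasFDerivAt.fderiv, InnerProductSpace.toDual_apply_apply]

lemma aux_E1 {d : ℕ} (f : EuclideanSpace ℝ (Fin d) → ℝ) (hf : ContDiff ℝ (⊤ : ℕ∞) f)
    (A : Finset (Fin d))
    (hinv : ∀ α : ℝ, 0 < α → ∀ θ, f (α • projA A θ + projAc A θ) = f θ)
    (x : EuclideanSpace ℝ (Fin d)) :
    ⟪gradient f x, projA A x⟫ = 0 := by
  set v := projA A x with hv
  have h1 : (1:ℝ) • v + projAc A x = x := by rw [one_smul, hv, P_add_Q]
  have hc : HasDerivAt (fun α : ℝ => α • v + projAc A x) v 1 := by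
    simpa using ((hasDerivAt_id (1:ℝ)).smul_const v).add_const (projAc A x)
  have hfd : HasFDerivAt f (fderiv ℝ f x) ((fun α : ℝ => α • v + projAc A x) 1) := by
    simpa only [h1] using (hf.differentiable (by simp) x).hasFDerivAt
  have hcomp : HasDerivAt (fun α : ℝ => f (α • v + projAc A x)) (fderiv ℝ f x v) 1 :=
    hfd.comp_hasDerivAt 1 hc
  have hev : (fun α : ℝ => f (α • v + projAc A x)) =ᶠ[nhds 1] fun _ => f x := by
    filter_upwards [Ioi_mem_nhds one_pos] with α hα
    exact hinv α hα x
  have hconst : HasDerivAt (fun α : ℝ => f (α • v + projAc A x)) 0 1 :=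
    (hasDerivAt_const 1 (f x)).congr_of_eventuallyEq hev
  have := hcomp.unique hconst
  rw [fderiv_eq_inner_gradient f hf] at this
  exact this

lemma aux_E2 {d : ℕ} (f : EuclideanSpace ℝ (Fin d) → ℝ) (hf : ContDiff ℝ (⊤ : ℕ∞) f)
    (A : Finset (Fin d))
    (hinv : ∀ α : ℝ, 0 < α → ∀ θ, f (α • projA A θ + projAc A θ) = f θ)
    (x v : EuclideanSpace ℝ (Fin d)) :
    ⟪projA A x, fderiv ℝ (gradient f) x v⟫ = - ⟪projA A v, gradient f x⟫ := by
  have hP : HasFDerivAt (fun y => Pclm A y) (Pclm A) x := (Pclm A).hasFDerivAt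
  have hG : HasFDerivAt (gradient f) (fderiv ℝ (gradient f) x) x :=
    ((contDiff_gradient f hf).differentiable (by simp) x).hasFDerivAt
  have hF := hP.inner ℝ hG
  have hF0 : HasFDerivAt (fun y => ⟪Pclm A y, gradient f y⟫)
      (0 : EuclideanSpace ℝ (Fin d) →L[ℝ] ℝ) x := by
    have he : (fun y => ⟪Pclm A y, gradient f y⟫) = fun _ => (0:ℝ) := by
      funext y
      rw [Pclm_apply, real_inner_comm]
      exact aux_E1 f hf A hinv y
    rw [he]
    exact hasFDerivAt_const 0 x
  have hu := hF.unique hF0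
  have := ContinuousLinearMap.ext_iff.mp hu v
  simp only [ContinuousLinearMap.comp_apply, ContinuousLinearMap.prod_apply,
    fderivInnerCLM_apply, ContinuousLinearMap.zero_apply, Pclm_apply] at this
  linarith

lemma projA_idem {d : ℕ} (A : Finset (Fin d)) (x : EuclideanSpace ℝ (Fin d)) :
    projA A (projA A x) = projA A x := by
  ext i; simp only [projA, PiLp.toLp_apply]; split <;> simp_all

lemma projAc_eq {d : ℕ} (A : Finset (Fin d)) (x : EuclideanSpace ℝ (Fin d)) :
    projAc A x = x - projA A x := by
  rw [eq_sub_iff_add_eq, add_comm, P_add_Q]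

lemma aux_E3 {d : ℕ} (f : EuclideanSpace ℝ (Fin d) → ℝ) (hf : ContDiff ℝ (⊤ : ℕ∞) f)
    (A : Finset (Fin d))
    (hinv : ∀ α : ℝ, 0 < α → ∀ θ, f (α • projA A θ + projAc A θ) = f θ)
    (x : EuclideanSpace ℝ (Fin d)) (α : ℝ) (hα : 0 < α) :
    projA A (gradient f (α • projA A x + projAc A x)) = (1/α) • projA A (gradient f x) := by
  set T : EuclideanSpace ℝ (Fin d) →L[ℝ] EuclideanSpace ℝ (Fin d) :=
    α • Pclm A + (ContinuousLinearMap.id ℝ _ - Pclm A) with hT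
  have hTy : ∀ y, T y = α • projA A y + projAc A y := by
    intro y
    simp only [hT, ContinuousLinearMap.add_apply, ContinuousLinearMap.smul_apply,
      ContinuousLinearMap.sub_apply, ContinuousLinearMap.id_apply, Pclm_apply]
    rw [projAc_eq]
  have hfT : (fun y => f (T y)) = f := by
    funext y; rw [hTy]; exact hinv α hα y
  have hchain : HasFDerivAt (fun y => f (T y)) ((fderiv ℝ f (T x)).comp T) x :=
    ((hf.differentiable (by simp) (T x)).hasFDerivAt).comp x T.hasFDerivAt
  rw [hfT] at hchain
  have hu : (fderiv ℝ f (T x)).comp T = fderiv ℝ f x :=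
    hchain.unique (hf.differentiable (by simp) x).hasFDerivAt
  have key : ∀ w, ⟪w, α • projA A (gradient f (T x))⟫ = ⟪w, projA A (gradient f x)⟫ := by
    intro w
    have h1 := ContinuousLinearMap.ext_iff.mp hu (projA A w)
    have hTP : T (projA A w) = α • projA A w := by
      rw [hTy, projA_idem, projAc_eq, projA_idem, sub_self, add_zero]
    rw [ContinuousLinearMap.comp_apply, hTP, fderiv_eq_inner_gradient f hf,
      fderiv_eq_inner_gradient f hf, inner_smul_right, inner_projA_right,
      inner_projA_right] at h1
    rw [inner_smul_right, inner_projA_right, inner_projA_right]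
    have e1 : ∑ i ∈ A, w i * gradient f (T x) i
        = ∑ i ∈ A, gradient f (T x) i * w i :=
      Finset.sum_congr rfl fun i _ => mul_comm _ _
    have e2 : ∑ i ∈ A, w i * gradient f x i
        = ∑ i ∈ A, gradient f x i * w i :=
      Finset.sum_congr rfl fun i _ => mul_comm _ _
    rw [e1, e2]
    exact h1
  have heq : α • projA A (gradient f (T x)) = projA A (gradient f x) :=
    ext_inner_left ℝ key
  have : projA A (gradient f (T x)) = (1/α) • projA A (gradient f x) := by
    rw [← heq, smul_smul, one_div_mul_cancel (ne_of_gt hα), one_smul]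
  rw [← hTy x] at *
  exact this

lemma projA_add {d : ℕ} (A : Finset (Fin d)) (u v : EuclideanSpace ℝ (Fin d)) :
    projA A (u + v) = projA A u + projA A v := (Pclm A).map_add u v

lemma projA_smul {d : ℕ} (A : Finset (Fin d)) (c : ℝ) (u : EuclideanSpace ℝ (Fin d)) :
    projA A (c • u) = c • projA A u := (Pclm A).map_smul c u

theorem scale_invariant_norm_decay_EoM {d : ℕ}
    (f : EuclideanSpace ℝ (Fin d) → ℝ) (hf : ContDiff ℝ (⊤ : ℕ∞) f)
    (A : Finset (Fin d))
    (hinv : ∀ α : ℝ, 0 < α → ∀ θ, f (α • projA A θ + projAc A θ) = f θ)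
    (lam η : ℝ) (hlam : 0 < lam) (hη : 0 < η)
    (g ξ₀ : EuclideanSpace ℝ (Fin d) → EuclideanSpace ℝ (Fin d))
    (hg : ∀ x, g x = gradient f x + lam • x)
    (hξ : ∀ x, ξ₀ x = (1 / 2 : ℝ) •
      (fderiv ℝ (fun y => gradient f y) x (g x) + lam • g x))
    (θ : ℝ → EuclideanSpace ℝ (Fin d))
    (hODE : ∀ t : ℝ, HasDerivAt θ (-g (θ t) - η • ξ₀ (θ t)) t)
    (hpos : ∀ t : ℝ, projA A (θ t) ≠ 0) :
    ∀ t : ℝ, HasDerivAt (fun t => ‖projA A (θ t)‖ ^ 2)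
      (-2 * lam * (1 + η * lam / 2) * ‖projA A (θ t)‖ ^ 2 +
        (η / ‖projA A (θ t)‖ ^ 2) *
          ‖projA A (gradient f
            ((1 / ‖projA A (θ t)‖) • projA A (θ t) + projAc A (θ t)))‖ ^ 2) t := by
  intro t
  set x := θ t with hx
  set G := gradient f x with hG
  set v := -g x - η • ξ₀ x with hv
  have hr : (0:ℝ) < ‖projA A x‖ := norm_pos_iff.mpr (hpos t)
  have hr2 : (0:ℝ) < ‖projA A x‖ ^ 2 := by positivity
  -- derivative of the inner-product form
  have hPθ : HasDerivAt (fun s => Pclm A (θ s)) (Pclm A v) t :=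
    (Pclm A).hasFDerivAt.comp_hasDerivAt t (hODE t)
  have hI : HasDerivAt (fun s => ⟪Pclm A (θ s), Pclm A (θ s)⟫)
      (⟪Pclm A x, Pclm A v⟫ + ⟪Pclm A v, Pclm A x⟫) t := hPθ.inner ℝ hPθ
  have hfun : (fun s => ‖projA A (θ s)‖ ^ 2)
      = (fun s => ⟪Pclm A (θ s), Pclm A (θ s)⟫) := by
    funext s
    rw [Pclm_apply, real_inner_self_eq_norm_sq]
  rw [hfun]
  convert hI using 1
  -- now a scalar identity
  simp only [Pclm_apply]
  -- basic scalars
  have hPxx : ⟪projA A x, x⟫ = ‖projA A x‖ ^ 2 := by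
    rw [← real_inner_self_eq_norm_sq, inner_projA_projA]
  have hPxG : ⟪projA A x, G⟫ = 0 := by
    rw [real_inner_comm]; exact aux_E1 f hf A hinv x
  have hPxg : ⟪projA A x, g x⟫ = lam * ‖projA A x‖ ^ 2 := by
    rw [hg, inner_add_right, inner_smul_right, hPxx, hPxG, zero_add]
  have hPgG : ⟪projA A (g x), G⟫ = ‖projA A G‖ ^ 2 := by
    rw [hg, ← hG, projA_add, projA_smul, inner_add_left, inner_smul_left, hPxG,
      ← real_inner_self_eq_norm_sq, inner_projA_projA]
    simp
  have hHg : ⟪projA A x, fderiv ℝ (gradient f) x (g x)⟫ = -‖projA A G‖ ^ 2 := by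
    rw [aux_E2 f hf A hinv x (g x), hPgG]
  have hPxξ : ⟪projA A x, ξ₀ x⟫
      = (1/2) * (-‖projA A G‖ ^ 2 + lam * (lam * ‖projA A x‖ ^ 2)) := by
    rw [hξ, inner_smul_right, inner_add_right, inner_smul_right, hPxg, hHg]
  have hPxv : ⟪projA A x, v⟫
      = -(lam * ‖projA A x‖ ^ 2)
        - η * ((1/2) * (-‖projA A G‖ ^ 2 + lam * (lam * ‖projA A x‖ ^ 2))) := by
    rw [hv, inner_sub_right, inner_neg_right, inner_smul_right, hPxg, hPxξ]
  -- the scaling identity for the gradient term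
  have hscale : ‖projA A (gradient f ((1 / ‖projA A x‖) • projA A x + projAc A x))‖ ^ 2
      = ‖projA A x‖ ^ 2 * ‖projA A G‖ ^ 2 := by
    have h3 := aux_E3 f hf A hinv x (1 / ‖projA A x‖) (by positivity)
    rw [h3, one_div_one_div, norm_smul, Real.norm_eq_abs, abs_of_pos hr, mul_pow]
  have hsym : ⟪projA A x, projA A v⟫ = ⟪projA A x, v⟫ := inner_projA_projA A x v
  have hsym2 : ⟪projA A v, projA A x⟫ = ⟪projA A x, v⟫ := by
    rw [real_inner_comm]; exact inner_projA_projA A x v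
  rw [hscale, hsym, hsym2, hPxv]
  field_simp
  ring
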